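/- arXiv:2201.07017 — 2 statements merged into one kernel-verified Lean document; each statement's English description precedes it below -/
import Mathlib

section
/- Let U ∈ ℝ^{m×k} have orthonormal columns and S ∈ ℝ^{m×k} be a selection matrix with S^T U invertible. Then the spectral norm of the oblique projector P = U (S^T U)^{-1} S^T equals ‖(S^T U)^{-1}‖, i.e., ‖P‖ = 1/σ_min(S^T U). -/
open Matrix

def IsSelection {m k : ℕ} (S : Matrix (Fin m) (Fin k) ℝ) : Prop :=
  ∃ s : Fin k → Fin m, Function.Injective s ∧ ∀ i j, S i j = if i = s j then 1 else 0

noncomputable def specNorm {m n : ℕ} (A : Matrix (Fin m) (Fin n) ℝ) : ℝ :=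
  ‖LinearMap.toContinuousLinearMap (Matrix.toEuclideanLin A)‖

noncomputable def sigmaMin {n : ℕ} (M : Matrix (Fin n) (Fin n) ℝ) : ℝ :=
  sInf ((fun x : EuclideanSpace ℝ (Fin n) => ‖Matrix.toEuclideanLin M x‖) '' {x | ‖x‖ = 1})

noncomputable def sigmaSucc {m n : ℕ} (k : ℕ) (A : Matrix (Fin m) (Fin n) ℝ) : ℝ :=
  sInf {x | ∃ B : Matrix (Fin m) (Fin n) ℝ, B.rank ≤ k ∧ specNorm (A - B) = x}

/-!
Since `Uᵀ U = 1` and `Sᵀ S = 1`, multiplying by `U` on the left or by `Sᵀ` on the right preserves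
the spectral norm: `‖U X‖ = ‖X‖` follows from `‖U‖ ≤ 1` (C*-identity `‖Uᴴ U‖ = ‖U‖²`) together
with `X = Uᴴ (U X)`, and the `Sᵀ` case is its adjoint. Hence `‖P‖ = ‖(Sᵀ U)⁻¹‖`. For an invertible
operator `f`, the bound `‖x‖ ≤ ‖f⁻¹‖ ‖f x‖` and its homogeneous converse identify
`inf_{‖x‖ = 1} ‖f x‖` with `‖f⁻¹‖⁻¹`.
-/

-- Under this scoped instance `specNorm A` is definitionally the norm `‖A‖`.
open scoped Matrix.Norms.L2Operator

section UnitSphere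

variable {E F : Type*} [NormedAddCommGroup E] [NormedSpace ℝ E]
  [NormedAddCommGroup F] [NormedSpace ℝ F]

theorem ContinuousLinearMap.mul_norm_le_norm_apply_of_unit_norm (f : E →L[ℝ] F) {c : ℝ}
    (hc : ∀ x, ‖x‖ = 1 → c ≤ ‖f x‖) (x : E) : c * ‖x‖ ≤ ‖f x‖ := by
  rcases eq_or_ne x 0 with rfl | hx
  · simp
  have hx' : 0 < ‖x‖ := norm_pos_iff.mpr hx
  have h := hc (‖x‖⁻¹ • x) (by rw [norm_smul, norm_inv, norm_norm, inv_mul_cancel₀ hx'.ne'])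
  rwa [map_smul, norm_smul, norm_inv, norm_norm, le_inv_mul_iff₀ hx', mul_comm] at h

theorem ContinuousLinearMap.sInf_norm_apply_unit_eq_inv_norm [Nontrivial E]
    {f : E →L[ℝ] F} {g : F →L[ℝ] E} (hgf : Function.LeftInverse g f)
    (hfg : Function.RightInverse g f) :
    sInf ((fun x => ‖f x‖) '' {x | ‖x‖ = 1}) = ‖g‖⁻¹ := by
  have hg : 0 < ‖g‖ := by
    refine norm_pos_iff.mpr fun h => ?_
    obtain ⟨x, hx⟩ := exists_ne (0 : E)
    exact hx (by rw [← hgf x, h, _root_.zero_apply])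
  have hlower : ∀ x, ‖x‖ = 1 → ‖g‖⁻¹ ≤ ‖f x‖ := fun x hx => by
    rw [inv_le_iff_one_le_mul₀' hg, ← hx]
    simpa only [hgf x] using g.le_opNorm (f x)
  obtain ⟨x₀, hx₀⟩ := exists_norm_eq E zero_le_one
  have hne : ((fun x => ‖f x‖) '' {x | ‖x‖ = 1}).Nonempty := ⟨_, x₀, hx₀, rfl⟩
  have hbdd : BddBelow ((fun x => ‖f x‖) '' {x | ‖x‖ = 1}) :=
    ⟨0, by rintro _ ⟨x, -, rfl⟩; exact norm_nonneg _⟩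
  set c := sInf ((fun x => ‖f x‖) '' {x | ‖x‖ = 1})
  have hc : ‖g‖⁻¹ ≤ c := le_csInf hne (by rintro _ ⟨x, hx, rfl⟩; exact hlower x hx)
  have hc_pos : 0 < c := (inv_pos.mpr hg).trans_le hc
  have hgc : ‖g‖ ≤ c⁻¹ := by
    refine g.opNorm_le_bound (inv_nonneg.mpr hc_pos.le) fun y => ?_
    have := f.mul_norm_le_norm_apply_of_unit_norm
      (fun x hx => csInf_le hbdd ⟨x, hx, rfl⟩) (g y)
    rw [hfg y] at this
    rwa [le_inv_mul_iff₀ hc_pos]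
  exact le_antisymm ((le_inv_comm₀ hg hc_pos).mp hgc) hc

end UnitSphere

namespace Matrix

variable {𝕜 : Type*} [RCLike 𝕜] {l m n : Type*} [Fintype l] [Fintype m] [Fintype n]
  [DecidableEq n]

theorem l2_opNorm_le_one_of_conjTranspose_mul_self_eq_one {U : Matrix m n 𝕜}
    (hU : Uᴴ * U = 1) : ‖U‖ ≤ 1 := by
  have h1 : ‖(1 : Matrix n n 𝕜)‖ ≤ 1 := by
    rw [← l2_opNorm_toEuclideanCLM, map_one]
    exact ContinuousLinearMap.norm_id_le
  rw [← hU, l2_opNorm_conjTranspose_mul_self] at h1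
  nlinarith [norm_nonneg U]

theorem l2_opNorm_mul_of_conjTranspose_mul_self_eq_one [DecidableEq l] [DecidableEq m]
    {U : Matrix m n 𝕜} (hU : Uᴴ * U = 1) (X : Matrix n l 𝕜) : ‖U * X‖ = ‖X‖ := by
  have hU₁ := l2_opNorm_le_one_of_conjTranspose_mul_self_eq_one hU
  refine le_antisymm ?_ ?_
  · calc ‖U * X‖ ≤ ‖U‖ * ‖X‖ := l2_opNorm_mul U X
      _ ≤ ‖X‖ := mul_le_of_le_one_left (norm_nonneg X) hU₁
  · calc ‖X‖ = ‖Uᴴ * (U * X)‖ := by rw [← Matrix.mul_assoc, hU, Matrix.one_mul]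
      _ ≤ ‖Uᴴ‖ * ‖U * X‖ := l2_opNorm_mul _ _
      _ ≤ ‖U * X‖ := by
        rw [l2_opNorm_conjTranspose]; exact mul_le_of_le_one_left (norm_nonneg _) hU₁

theorem l2_opNorm_mul_conjTranspose_of_conjTranspose_mul_self_eq_one [DecidableEq l]
    [DecidableEq m] {S : Matrix m n 𝕜} (hS : Sᴴ * S = 1) (X : Matrix l n 𝕜) :
    ‖X * Sᴴ‖ = ‖X‖ := by
  rw [← l2_opNorm_conjTranspose, conjTranspose_mul, conjTranspose_conjTranspose,
    l2_opNorm_mul_of_conjTranspose_mul_self_eq_one hS, l2_opNorm_conjTranspose]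

end Matrix

theorem sigmaMin_eq_inv_l2_opNorm_inv {n : ℕ} {M : Matrix (Fin n) (Fin n) ℝ} (hM : IsUnit M) :
    sigmaMin M = ‖M⁻¹‖⁻¹ := by
  cases n with
  | zero =>
    -- Both sides are junk zeros: `sInf ∅ = 0` and `0⁻¹ = 0`.
    have hsphere : {x : EuclideanSpace ℝ (Fin 0) | ‖x‖ = 1} = ∅ := by
      ext x; simp [Subsingleton.elim x 0]
    rw [sigmaMin, hsphere, Set.image_empty, Real.sInf_empty, Subsingleton.elim M⁻¹ 0,
      norm_zero, _root_.inv_zero]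
  | succ n =>
    have hinv (A B : Matrix (Fin (n + 1)) (Fin (n + 1)) ℝ) (h : A * B = 1) :
        Function.LeftInverse (toEuclideanCLM (𝕜 := ℝ) A) (toEuclideanCLM (𝕜 := ℝ) B) := by
      have hAB : toEuclideanCLM (𝕜 := ℝ) A * toEuclideanCLM (𝕜 := ℝ) B = 1 := by
        rw [← map_mul, h, map_one]
      exact fun x => congr($hAB x)
    exact ContinuousLinearMap.sInf_norm_apply_unit_eq_inv_norm
      (hinv _ _ (M.nonsing_inv_mul ((M.isUnit_iff_isUnit_det).mp hM)))
      (hinv _ _ (M.mul_nonsing_inv ((M.isUnit_iff_isUnit_det).mp hM)))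

theorem IsSelection.transpose_mul_self {m k : ℕ} {S : Matrix (Fin m) (Fin k) ℝ}
    (hS : IsSelection S) : Sᵀ * S = 1 := by
  obtain ⟨s, hs, hS⟩ := hS
  ext i j
  simp [Matrix.mul_apply, hS, Matrix.one_apply, hs.eq_iff, eq_comm]

theorem stmt_7 {m k : ℕ} (U : Matrix (Fin m) (Fin k) ℝ) (S : Matrix (Fin m) (Fin k) ℝ)
    (hU : Uᵀ * U = 1) (hS : IsSelection S) (hinv : IsUnit (Sᵀ * U)) :
    specNorm (U * (Sᵀ * U)⁻¹ * Sᵀ) = specNorm ((Sᵀ * U)⁻¹) ∧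
    specNorm (U * (Sᵀ * U)⁻¹ * Sᵀ) = (sigmaMin (Sᵀ * U))⁻¹ := by
  have hU' : Uᴴ * U = 1 := by rwa [conjTranspose_eq_transpose_of_trivial]
  have hS' : Sᴴ * S = 1 := by
    rw [conjTranspose_eq_transpose_of_trivial]
    exact hS.transpose_mul_self
  have hP : ‖U * (Sᵀ * U)⁻¹ * Sᵀ‖ = ‖(Sᵀ * U)⁻¹‖ := by
    rw [← conjTranspose_eq_transpose_of_trivial S,
      l2_opNorm_mul_conjTranspose_of_conjTranspose_mul_self_eq_one hS',
      l2_opNorm_mul_of_conjTranspose_mul_self_eq_one hU']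
  exact ⟨hP, by rw [sigmaMin_eq_inv_l2_opNorm_inv hinv, inv_inv]; exact hP⟩
end

section
/- Let A ∈ ℝ^{m×n} and let C consist of k̂ columns of A with full column rank, R consist of k̂ rows of A with full row rank, and M = C^+ A R^+ (pseudoinverses). Then the relative error satisfies ‖A − C M R‖ ≤ ‖A − C C^+ A‖ + ‖A − A R^+ R‖ in spectral norm, and each term is at least σ_{k̂+1}(A). -/
open Matrix

/-!
With `P = C C⁺` and `Q = R⁺ R` we have `C M R = P A Q` and
`A - P A Q = (A - P A) + P (A - A Q)`. Since `C` has full column rank, `P` is an orthogonal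
projection, so `‖P‖ ≤ 1` and the first bound follows from the triangle inequality. The lower
bounds hold because `C C⁺ A` and `A R⁺ R` have rank at most `k̂`.
-/

open scoped Matrix.Norms.L2Operator

namespace Matrix

variable {m n k : Type*} [Fintype m] [Fintype n] [Fintype k] [DecidableEq k]

theorem isUnit_of_rank_eq_card {K : Type*} [Field K] {A : Matrix k k K}
    (h : A.rank = Fintype.card k) : IsUnit A := by
  rw [← mulVec_surjective_iff_isUnit, ← coe_mulVecLin, ← LinearMap.range_eq_top]
  apply Submodule.eq_top_of_finrank_eq
  rw [← rank, h, Module.finrank_fintype_fun_eq_card]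

theorem isUnit_conjTranspose_mul_self_of_rank_eq_card {K : Type*} [Field K] [PartialOrder K]
    [StarRing K] [StarOrderedRing K] {C : Matrix m k K} (h : C.rank = Fintype.card k) :
    IsUnit (Cᴴ * C) :=
  isUnit_of_rank_eq_card (by rw [rank_conjTranspose_mul_self, h])

theorem isStarProjection_mul_inv_conjTranspose_mul_self_mul_conjTranspose {R : Type*}
    [CommRing R] [StarRing R] {C : Matrix m k R} (h : IsUnit (Cᴴ * C)) :
    IsStarProjection (C * (Cᴴ * C)⁻¹ * Cᴴ) := by
  have hdet : IsUnit (Cᴴ * C).det := (isUnit_iff_isUnit_det _).mp h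
  refine ⟨?_, ?_⟩
  · calc C * (Cᴴ * C)⁻¹ * Cᴴ * (C * (Cᴴ * C)⁻¹ * Cᴴ)
          = C * ((Cᴴ * C)⁻¹ * (Cᴴ * C)) * (Cᴴ * C)⁻¹ * Cᴴ := by simp only [Matrix.mul_assoc]
        _ = C * (Cᴴ * C)⁻¹ * Cᴴ := by rw [nonsing_inv_mul _ hdet, Matrix.mul_one]
  · rw [IsSelfAdjoint, star_eq_conjTranspose, conjTranspose_mul, conjTranspose_mul,
      conjTranspose_nonsing_inv, conjTranspose_mul, conjTranspose_conjTranspose, Matrix.mul_assoc]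

theorem l2_opNorm_sub_mul_mul_le {𝕜 : Type*} [RCLike 𝕜] [DecidableEq m] [DecidableEq n]
    (A : Matrix m n 𝕜) {P : Matrix m m 𝕜} (hP : IsStarProjection P) (Q : Matrix n n 𝕜) :
    ‖A - P * A * Q‖ ≤ ‖A - P * A‖ + ‖A - A * Q‖ := by
  have hsplit : A - P * A * Q = (A - P * A) + P * (A - A * Q) := by
    rw [Matrix.mul_sub, Matrix.mul_assoc]
    abel
  calc ‖A - P * A * Q‖ ≤ ‖A - P * A‖ + ‖P * (A - A * Q)‖ := hsplit ▸ norm_add_le _ _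
    _ ≤ ‖A - P * A‖ + ‖P‖ * ‖A - A * Q‖ := by gcongr; exact l2_opNorm_mul _ _
    _ ≤ ‖A - P * A‖ + ‖A - A * Q‖ := by
        gcongr
        exact mul_le_of_le_one_left (norm_nonneg _) hP.norm_le

end Matrix

theorem specNorm_eq_l2_opNorm {m n : ℕ} (A : Matrix (Fin m) (Fin n) ℝ) : specNorm A = ‖A‖ := rfl

theorem sigmaSucc_le_specNorm_sub {m n k : ℕ} (A : Matrix (Fin m) (Fin n) ℝ)
    {B : Matrix (Fin m) (Fin n) ℝ} (hB : B.rank ≤ k) : sigmaSucc k A ≤ specNorm (A - B) :=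
  csInf_le ⟨0, by rintro x ⟨B', -, rfl⟩; exact norm_nonneg _⟩ ⟨B, hB, rfl⟩

theorem stmt_15_general {m n kh : ℕ} (A : Matrix (Fin m) (Fin n) ℝ)
    (C : Matrix (Fin m) (Fin kh) ℝ) (R : Matrix (Fin kh) (Fin n) ℝ)
    (hrC : C.rank = kh)
    (M : Matrix (Fin kh) (Fin kh) ℝ) (hM : M = ((Cᵀ * C)⁻¹ * Cᵀ) * A * (Rᵀ * (R * Rᵀ)⁻¹)) :
    specNorm (A - C * M * R) ≤
      specNorm (A - C * (((Cᵀ * C)⁻¹ * Cᵀ) * A)) + specNorm (A - A * ((Rᵀ * (R * Rᵀ)⁻¹) * R)) ∧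
    sigmaSucc kh A ≤ specNorm (A - C * (((Cᵀ * C)⁻¹ * Cᵀ) * A)) ∧
    sigmaSucc kh A ≤ specNorm (A - A * ((Rᵀ * (R * Rᵀ)⁻¹) * R)) := by
  subst hM
  refine ⟨?_, sigmaSucc_le_specNorm_sub A ?_, sigmaSucc_le_specNorm_sub A ?_⟩
  · have hC : IsUnit (Cᴴ * C) :=
      isUnit_conjTranspose_mul_self_of_rank_eq_card (by rw [hrC, Fintype.card_fin])
    have hbound := l2_opNorm_sub_mul_mul_le A
      (isStarProjection_mul_inv_conjTranspose_mul_self_mul_conjTranspose hC)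
      (Rᵀ * (R * Rᵀ)⁻¹ * R)
    simp only [specNorm_eq_l2_opNorm]
    simpa only [conjTranspose_eq_transpose_of_trivial, Matrix.mul_assoc] using hbound
  · exact (rank_mul_le_left _ _).trans (rank_le_width C)
  · exact (rank_mul_le_right _ _).trans ((rank_mul_le_left _ _).trans (rank_le_width _))

theorem stmt_15 {m n kh : ℕ} (A : Matrix (Fin m) (Fin n) ℝ)
    (P : Matrix (Fin n) (Fin kh) ℝ) (S : Matrix (Fin m) (Fin kh) ℝ)
    (hP : IsSelection P) (hS : IsSelection S)
    (C : Matrix (Fin m) (Fin kh) ℝ) (R : Matrix (Fin kh) (Fin n) ℝ)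
    (hC : C = A * P) (hR : R = Sᵀ * A) (hrC : C.rank = kh) (hrR : R.rank = kh)
    (M : Matrix (Fin kh) (Fin kh) ℝ) (hM : M = ((Cᵀ * C)⁻¹ * Cᵀ) * A * (Rᵀ * (R * Rᵀ)⁻¹)) :
    specNorm (A - C * M * R) ≤
      specNorm (A - C * (((Cᵀ * C)⁻¹ * Cᵀ) * A)) + specNorm (A - A * ((Rᵀ * (R * Rᵀ)⁻¹) * R)) ∧
    sigmaSucc kh A ≤ specNorm (A - C * (((Cᵀ * C)⁻¹ * Cᵀ) * A)) ∧
    sigmaSucc kh A ≤ specNorm (A - A * ((Rᵀ * (R * Rᵀ)⁻¹) * R)) :=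
  stmt_15_general A C R hrC M hM
end
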